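/- Let eₙ be the number of critical points of fⁿ in (a,b) and let sₙ be the number of x ∈ (a,b) with fⁿ(x) = x_c, fⁱ(x) ≠ x_c for 0 ≤ i ≤ n-1, and (fⁿ)'(x) ≠ 0. Then for all n ≥ 2, eₙ = e_{n-1} + s_{n-1}. -/

import Mathlib

/-!
Differentiating `f^[n] = f ∘ f^[n-1]` gives `(f^[n])'(x) = f'(f^[n-1] x) · (f^[n-1])'(x)`. Since `f'`
vanishes on `[a, b]` exactly at `x_c`, the critical points of `f^[n]` are those of `f^[n-1]`
together with the disjoint set of non-critical points of `f^[n-1]` sent to `x_c`. On the latter the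
orbit cannot meet `x_c` before time `n - 1`, as that would already make `(f^[n-1])'(x)` vanish.
-/

open Set Filter Topology

section Iterate

variable {𝕜 : Type*} [NontriviallyNormedField 𝕜] {f : 𝕜 → 𝕜}

theorem deriv_iterate_succ (hf : Differentiable 𝕜 f) (m : ℕ) (x : 𝕜) :
    deriv (f^[m + 1]) x = deriv f (f^[m] x) * deriv (f^[m]) x := by
  rw [Function.iterate_succ', deriv_comp x hf.differentiableAt (hf.iterate m).differentiableAt]

theorem deriv_iterate_eq_zero_of_iterate_eq (hf : Differentiable 𝕜 f) {c x : 𝕜}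
    (hc : deriv f c = 0) {i m : ℕ} (him : i < m) (hix : f^[i] x = c) :
    deriv (f^[m]) x = 0 := by
  induction m, him using Nat.le_induction with
  | base => rw [deriv_iterate_succ hf, hix, hc, zero_mul]
  | succ k _ ih => rw [deriv_iterate_succ hf, ih, mul_zero]

theorem setOf_deriv_iterate_succ_eq_zero (hf : Differentiable 𝕜 f) {s : Set 𝕜} {c : 𝕜}
    (hc : deriv f c = 0) {m : ℕ} (hzero : ∀ x ∈ s, deriv f (f^[m] x) = 0 → f^[m] x = c) :
    {x ∈ s | deriv (f^[m + 1]) x = 0} =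
      {x ∈ s | deriv (f^[m]) x = 0} ∪
        {x ∈ s | f^[m] x = c ∧ (∀ i < m, f^[i] x ≠ c) ∧ deriv (f^[m]) x ≠ 0} := by
  ext x
  simp only [mem_ofPred_eq, mem_union, deriv_iterate_succ hf, mul_eq_zero]
  constructor
  · rintro ⟨hx, hfx | hx'⟩
    · by_cases hd : deriv (f^[m]) x = 0
      · exact .inl ⟨hx, hd⟩
      · exact .inr ⟨hx, hzero x hx hfx,
          fun i hi hix => hd (deriv_iterate_eq_zero_of_iterate_eq hf hc hi hix), hd⟩
    · exact .inl ⟨hx, hx'⟩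
  · rintro (⟨hx, hd⟩ | ⟨hx, hfx, -, -⟩)
    · exact ⟨hx, .inr hd⟩
    · exact ⟨hx, .inl (hfx ▸ hc)⟩

theorem ncard_setOf_deriv_iterate_succ_eq_zero (hf : Differentiable 𝕜 f) {s : Set 𝕜} {c : 𝕜}
    (hc : deriv f c = 0) {m : ℕ} (hzero : ∀ x ∈ s, deriv f (f^[m] x) = 0 → f^[m] x = c)
    (hfin : {x ∈ s | deriv (f^[m + 1]) x = 0}.Finite) :
    {x ∈ s | deriv (f^[m + 1]) x = 0}.ncard =
      {x ∈ s | deriv (f^[m]) x = 0}.ncard +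
        {x ∈ s | f^[m] x = c ∧ (∀ i < m, f^[i] x ≠ c) ∧ deriv (f^[m]) x ≠ 0}.ncard := by
  rw [setOf_deriv_iterate_succ_eq_zero hf hc hzero] at hfin ⊢
  refine ncard_union_eq ?_ (hfin.subset subset_union_left) (hfin.subset subset_union_right)
  exact disjoint_left.2 fun x hx hx' => hx'.2.2.2 hx.2

end Iterate

section Unimodal

variable {f : ℝ → ℝ} {a b c : ℝ}

theorem deriv_eq_zero_of_deriv_pos_of_deriv_neg (hf : Differentiable ℝ f) (hc : c ∈ Ioo a b)
    (hup : ∀ x ∈ Ico a c, 0 < deriv f x) (hdn : ∀ x ∈ Ioc c b, deriv f x < 0) :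
    deriv f c = 0 := by
  refine IsLocalMax.deriv_eq_zero <| isLocalMax_of_deriv hf.continuous.continuousAt
    (.of_forall fun x => hf x) ?_ ?_
  · filter_upwards [Ioo_mem_nhdsLT hc.1] with x hx using (hup x ⟨hx.1.le, hx.2⟩).le
  · filter_upwards [Ioo_mem_nhdsGT hc.2] with x hx using (hdn x ⟨hx.1, hx.2.le⟩).le

theorem eq_of_deriv_eq_zero_of_deriv_pos_of_deriv_neg (hup : ∀ x ∈ Ico a c, 0 < deriv f x)
    (hdn : ∀ x ∈ Ioc c b, deriv f x < 0) {y : ℝ} (hy : y ∈ Icc a b) (h : deriv f y = 0) :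
    y = c := by
  rcases lt_trichotomy y c with hyc | hyc | hyc
  · exact absurd h (hup y ⟨hy.1, hyc⟩).ne'
  · exact hyc
  · exact absurd h (hdn y ⟨hyc, hy.2⟩).ne

end Unimodal

theorem crit_count_recursion_general
    (a b x_c : ℝ) (f : ℝ → ℝ)
    (hmap : Set.MapsTo f (Set.Icc a b) (Set.Icc a b))
    (hf : ContDiff ℝ 2 f)
    (hxc : x_c ∈ Set.Ioo a b)
    (hup : ∀ x ∈ Set.Ico a x_c, 0 < deriv f x)
    (hdn : ∀ x ∈ Set.Ioc x_c b, deriv f x < 0)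
    (hfin : ∀ n : ℕ, 1 ≤ n → {x ∈ Ioo a b | deriv (f^[n]) x = 0}.Finite) :
    ∀ n : ℕ, 2 ≤ n →
      {x ∈ Ioo a b | deriv (f^[n]) x = 0}.ncard =
        {x ∈ Ioo a b | deriv (f^[n-1]) x = 0}.ncard +
        {x ∈ Ioo a b | f^[n-1] x = x_c ∧ (∀ i : ℕ, i ≤ n - 2 → f^[i] x ≠ x_c) ∧
          deriv (f^[n-1]) x ≠ 0}.ncard := by
  intro n hn
  obtain ⟨m, rfl⟩ : ∃ m, n = m + 2 := ⟨n - 2, by omega⟩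
  have hdf : Differentiable ℝ f := hf.differentiable (by norm_num)
  have hzero (x : ℝ) (hx : x ∈ Ioo a b) (h : deriv f (f^[m + 1] x) = 0) : f^[m + 1] x = x_c :=
    eq_of_deriv_eq_zero_of_deriv_pos_of_deriv_neg hup hdn
      (hmap.iterate _ (Ioo_subset_Icc_self hx)) h
  have hcount := ncard_setOf_deriv_iterate_succ_eq_zero hdf
    (deriv_eq_zero_of_deriv_pos_of_deriv_neg hdf hxc hup hdn) hzero (hfin (m + 2) (by omega))
  simp only [Nat.lt_succ_iff] at hcount
  exact hcount

theorem crit_count_recursion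
    (a b x_c : ℝ) (f : ℝ → ℝ) (hab : a < b)
    (hmap : Set.MapsTo f (Set.Icc a b) (Set.Icc a b))
    (hf : ContDiff ℝ 2 f)
    (hxc : x_c ∈ Set.Ioo a b)
    (h2 : deriv (deriv f) x_c < 0)
    (hup : ∀ x ∈ Set.Ico a x_c, 0 < deriv f x)
    (hdn : ∀ x ∈ Set.Ioc x_c b, deriv f x < 0)
    (hfin : ∀ n : ℕ, 1 ≤ n → {x ∈ Ioo a b | deriv (f^[n]) x = 0}.Finite) :
    ∀ n : ℕ, 2 ≤ n →
      {x ∈ Ioo a b | deriv (f^[n]) x = 0}.ncard =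
        {x ∈ Ioo a b | deriv (f^[n-1]) x = 0}.ncard +
        {x ∈ Ioo a b | f^[n-1] x = x_c ∧ (∀ i : ℕ, i ≤ n - 2 → f^[i] x ≠ x_c) ∧
          deriv (f^[n-1]) x ≠ 0}.ncard :=
  crit_count_recursion_general a b x_c f hmap hf hxc hup hdn hfin
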